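/- arXiv:2106.02114 — 3 statements merged into one kernel-verified Lean document; each statement's English description precedes it below -/
import Mathlib

section
/- Let G be a finite simple graph with at least one edge and let s be a vertex of G that is covered by every maximum matching of G. Then for any maximum matching M of G, writing {s,w} for the edge of M incident to s, we have: M \ {{s,w}} is a maximum matching of G − s, and g(G − s, w) = 0 (i.e., moving the token from s to w is a winning move in Undirected Geography). -/
/-- `mex S` is the least natural number not in `S`. -/
noncomputable def mex (s : Finset ℕ) : ℕ := sInf {n : ℕ | n ∉ s}

/-- The Undirected Geography Grundy value for the graph `G`, played on the set `A` of
remaining vertices (i.e. on the induced subgraph `G[A]`) with the token on `s`: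
`g(A,s) = mex { g(A − s, v) : v ∈ A − s adjacent to s }`. -/
noncomputable def geo {V : Type} [DecidableEq V] (G : SimpleGraph V) [DecidableRel G.Adj]
    (A : Finset V) (s : V) : ℕ :=
  if h : s ∈ A then
    mex (((A.erase s).filter (fun v => G.Adj s v)).image (fun v => geo G (A.erase s) v))
  else 0
termination_by A.card
decreasing_by
  simp_wf
  exact Finset.card_erase_lt_of_mem h

/-- `M` is a maximum matching of the induced subgraph of `G` on the vertex set `B`:
`M` is a matching, its vertex set lies in `B`, and no matching inside `B` covers more
vertices (equivalently, has more edges). -/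
def IsMaxMatchingOn {V : Type} (G : SimpleGraph V) (B : Set V) (M : G.Subgraph) : Prop :=
  M.IsMatching ∧ M.verts ⊆ B ∧
    ∀ M' : G.Subgraph, M'.IsMatching → M'.verts ⊆ B → M'.verts.ncard ≤ M.verts.ncard

/-- A matching `M` covers the vertex `s` iff `s` is one of its matched vertices. -/
def MatchingCovers {V : Type} {G : SimpleGraph V} (M : G.Subgraph) (s : V) : Prop :=
  s ∈ M.verts

/-!
A vertex `t` of a finite vertex set `A` is a P-position of Undirected Geography on `G[A]` exactly
when some maximum matching of `G[A]` misses `t` (proved by induction on `A`). If such a matching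
`M` exists, any move `t → v` leads to `G[A - t]`, where `v` must be covered by every maximum
matching: otherwise one avoiding `v` plus the edge `tv` would beat `M`. Conversely, if `t` is
covered by every maximum matching `M`, say by the edge `tu`, then deleting `tu` leaves a maximum
matching of `G[A - t]` (matchings have even size, and one of the size of `M` inside `A - t` would
be a maximum matching of `G[A]` missing `t`), so moving to the partner `u` wins.
-/

open SimpleGraph

lemma mex_eq_zero_iff (s : Finset ℕ) : mex s = 0 ↔ 0 ∉ s := by
  refine ⟨fun h h0 => ?_, fun h => Nat.sInf_eq_zero.mpr (Or.inl h)⟩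
  rcases Nat.sInf_eq_zero.mp h with h1 | h1
  · exact h1 h0
  · obtain ⟨n, hn⟩ := s.exists_notMem
    exact (Set.eq_empty_iff_forall_notMem.mp h1 n) hn

namespace SimpleGraph.Subgraph

variable {V : Type} {G : SimpleGraph V} {M N : G.Subgraph} {t u : V}

lemma IsMatching.deleteVerts_pair (hM : M.IsMatching) (htu : M.Adj t u) :
    (M.deleteVerts {t, u}).IsMatching := by
  rintro v ⟨hvM, hvtu⟩
  obtain ⟨x, hvx, hx⟩ := hM hvM
  have hvt : v ≠ t := fun h => hvtu (by simp [h])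
  have hvu : v ≠ u := fun h => hvtu (by simp [h])
  have hxt : x ≠ t := by
    rintro rfl
    exact hvu (hM.eq_of_adj_left hvx.symm htu)
  have hxu : x ≠ u := by
    rintro rfl
    exact hvt (hM.eq_of_adj_right hvx htu)
  refine ⟨x, deleteVerts_adj.mpr ⟨hvM, ?_, M.edge_vert hvx.symm, ?_, hvx⟩,
    fun y hy => hx y (deleteVerts_adj.mp hy).2.2.2.2⟩
  exacts [by simp [hvt, hvu], by simp [hxt, hxu]]

lemma IsMatching.sup_subgraphOfAdj (hN : N.IsMatching) (h : G.Adj t u) (ht : t ∉ N.verts)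
    (hu : u ∉ N.verts) : (N ⊔ G.subgraphOfAdj h).IsMatching := by
  refine hN.sup (IsMatching.subgraphOfAdj h) ?_
  rw [hN.support_eq_verts, Set.disjoint_left]
  intro x hxN hx
  have hx' : x ∈ ({t, u} : Set V) := subgraphOfAdj_verts G h ▸ support_subset_verts _ hx
  rcases hx' with rfl | rfl
  exacts [ht hxN, hu hxN]

variable [Finite V]

lemma ncard_verts_sup_subgraphOfAdj (h : G.Adj t u) (ht : t ∉ N.verts) (hu : u ∉ N.verts) :
    (N ⊔ G.subgraphOfAdj h).verts.ncard = N.verts.ncard + 2 := by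
  have hdisj : Disjoint N.verts {t, u} := by
    rw [Set.disjoint_left]
    rintro x hx (rfl | rfl)
    exacts [ht hx, hu hx]
  rw [verts_sup, subgraphOfAdj_verts, Set.ncard_union_eq hdisj, Set.ncard_pair (G.ne_of_adj h)]

lemma ncard_verts_deleteVerts_pair_add_two (htu : M.Adj t u) :
    (M.deleteVerts {t, u}).verts.ncard + 2 = M.verts.ncard := by
  have hsub : ({t, u} : Set V) ⊆ M.verts := by
    rintro x (rfl | rfl)
    exacts [M.edge_vert htu, M.edge_vert htu.symm]
  have h2 := Set.ncard_pair (M.adj_sub htu).ne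
  have hle := Set.ncard_le_ncard hsub
  rw [deleteVerts_verts, Set.ncard_sdiff hsub]
  omega

lemma IsMatching.even_ncard_verts (hM : M.IsMatching) : Even M.verts.ncard := by
  have := Fintype.ofFinite M.verts
  rw [Set.ncard_eq_toFinset_card']
  exact hM.even_card

lemma IsMatching.ncard_verts_add_two_le (hN : N.IsMatching) (hM : M.IsMatching)
    (h : N.verts.ncard < M.verts.ncard) : N.verts.ncard + 2 ≤ M.verts.ncard := by
  obtain ⟨a, ha⟩ := hN.even_ncard_verts
  obtain ⟨b, hb⟩ := hM.even_ncard_verts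
  omega

end SimpleGraph.Subgraph

open SimpleGraph.Subgraph

section MaxMatching

variable {V : Type} [Finite V] {G : SimpleGraph V}

lemma exists_isMaxMatchingOn (G : SimpleGraph V) (B : Set V) : ∃ M, IsMaxMatchingOn G B M := by
  let S : Set ℕ := {n | ∃ M : G.Subgraph, M.IsMatching ∧ M.verts ⊆ B ∧ M.verts.ncard = n}
  have hne : S.Nonempty := ⟨0, ⊥, fun _ hv => hv.elim, Set.empty_subset _, Set.ncard_empty V⟩
  have hbdd : BddAbove S := ⟨Nat.card V, by
    rintro n ⟨M, -, -, rfl⟩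
    exact Set.ncard_le_card _⟩
  obtain ⟨M, hM, hMB, hcard⟩ := Nat.sSup_mem hne hbdd
  exact ⟨M, hM, hMB, fun N hN hNB => hcard ▸ le_csSup hbdd ⟨N, hN, hNB, rfl⟩⟩

lemma IsMaxMatchingOn.deleteVerts_pair {B : Set V} {M : G.Subgraph} {t u : V}
    (hM : IsMaxMatchingOn G B M) (htu : M.Adj t u)
    (hcov : ∀ N, IsMaxMatchingOn G B N → t ∈ N.verts) :
    IsMaxMatchingOn G (B \ {t}) (M.deleteVerts {t, u}) := by
  obtain ⟨hMm, hMB, hMmax⟩ := hM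
  refine ⟨hMm.deleteVerts_pair htu, ?_, fun N hN hNB => ?_⟩
  · rintro x ⟨hxM, hxtu⟩
    exact ⟨hMB hxM, fun hxt => hxtu (Or.inl hxt)⟩
  have hNB' : N.verts ⊆ B := hNB.trans Set.sdiff_subset
  have hlt : N.verts.ncard < M.verts.ncard := by
    refine (hMmax N hN hNB').lt_of_ne fun heq => ?_
    have hNmax : IsMaxMatchingOn G B N :=
      ⟨hN, hNB', fun N' hN' hN'B => heq ▸ hMmax N' hN' hN'B⟩
    exact (hNB (hcov N hNmax)).2 rfl
  have := hN.ncard_verts_add_two_le hMm hlt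
  have := ncard_verts_deleteVerts_pair_add_two htu
  omega

end MaxMatching

section Geography

variable {V : Type} [DecidableEq V] (G : SimpleGraph V) [DecidableRel G.Adj]

lemma geo_eq_zero_iff_forall_ne_zero {A : Finset V} {t : V} (ht : t ∈ A) :
    geo G A t = 0 ↔ ∀ v ∈ A.erase t, G.Adj t v → geo G (A.erase t) v ≠ 0 := by
  rw [geo, dif_pos ht, mex_eq_zero_iff]
  simp only [Finset.mem_image, Finset.mem_filter, not_exists, not_and, and_imp]

theorem geo_eq_zero_iff_exists_isMaxMatchingOn_notMem [Finite V] (A : Finset V) {t : V}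
    (ht : t ∈ A) :
    geo G A t = 0 ↔ ∃ M : G.Subgraph, IsMaxMatchingOn G A M ∧ t ∉ M.verts := by
  induction A using Finset.strongInduction generalizing t with
  | _ A ih =>
  have hA : (↑(A.erase t) : Set V) = ↑A \ {t} := Finset.coe_erase t A
  rw [geo_eq_zero_iff_forall_ne_zero G ht]
  constructor
  · intro hwin
    by_contra! hcov
    obtain ⟨M, hM⟩ := exists_isMaxMatchingOn G (↑A : Set V)
    obtain ⟨u, htu, -⟩ := hM.1 (hcov M hM)
    have hu : u ∈ A.erase t :=
      Finset.mem_erase.mpr ⟨(M.adj_sub htu).ne.symm, hM.2.1 (M.edge_vert htu.symm)⟩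
    have hmax : IsMaxMatchingOn G ↑(A.erase t) (M.deleteVerts {t, u}) :=
      hA ▸ hM.deleteVerts_pair htu hcov
    exact hwin u hu (M.adj_sub htu) ((ih _ (Finset.erase_ssubset ht) hu).mpr
      ⟨M.deleteVerts {t, u}, hmax, fun hu' => hu'.2 (Or.inr rfl)⟩)
  · rintro ⟨M, hM, htM⟩ v hv hadj hv0
    obtain ⟨N, hN, hvN⟩ := (ih _ (Finset.erase_ssubset ht) hv).mp hv0
    have htN : t ∉ N.verts := fun htN => (hA ▸ hN.2.1 htN).2 rfl
    have hNA : N.verts ⊆ A := hN.2.1.trans (hA ▸ Set.sdiff_subset)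
    have hbig : (N ⊔ G.subgraphOfAdj hadj).verts ⊆ A := by
      rw [verts_sup, subgraphOfAdj_verts]
      refine Set.union_subset hNA (Set.insert_subset ht (Set.singleton_subset_iff.mpr ?_))
      exact Finset.mem_of_mem_erase hv
    have hMN : M.verts.ncard ≤ N.verts.ncard :=
      hN.2.2 M hM.1 (hA ▸ fun x hx => ⟨hM.2.1 hx, fun hxt => htM (hxt ▸ hx)⟩)
    have hNM : N.verts.ncard + 2 ≤ M.verts.ncard := ncard_verts_sup_subgraphOfAdj hadj htN hvN ▸
      hM.2.2 _ (hN.1.sup_subgraphOfAdj hadj htN hvN) hbig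
    omega

end Geography

theorem stmt3_general {V : Type} [Fintype V] [DecidableEq V]
    (G : SimpleGraph V) [DecidableRel G.Adj]
    (s : V)
    (hs : ∀ M : G.Subgraph, IsMaxMatchingOn G Set.univ M → MatchingCovers M s)
    (M : G.Subgraph) (hM : IsMaxMatchingOn G Set.univ M)
    (w : V) (hw : M.Adj s w) :
    IsMaxMatchingOn G {s}ᶜ (M.deleteVerts {s, w}) ∧
      geo G (Finset.univ.erase s) w = 0 := by
  have hmax : IsMaxMatchingOn G {s}ᶜ (M.deleteVerts {s, w}) :=
    Set.compl_eq_univ_sdiff {s} ▸ hM.deleteVerts_pair hw hs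
  have hcoe : (↑(Finset.univ.erase s) : Set V) = {s}ᶜ := by ext; simp
  have hws : w ∈ Finset.univ.erase s :=
    Finset.mem_erase.mpr ⟨(M.adj_sub hw).ne.symm, Finset.mem_univ w⟩
  refine ⟨hmax, (geo_eq_zero_iff_exists_isMaxMatchingOn_notMem G _ hws).mpr ?_⟩
  exact ⟨M.deleteVerts {s, w}, hcoe ▸ hmax, fun hw' => hw'.2 (Or.inr rfl)⟩

/-- suppose `G` has at least one edge and `s` is covered by every maximum
matching of `G`.  If `M` is any maximum matching of `G` and `{s,w}` is the edge of `M`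
incident to `s` (i.e. `M.Adj s w`), then `M` minus the edge `{s,w}` (realized as
`M.deleteVerts {s,w}`, since the only `M`-edge at `s` or `w` is `{s,w}`) is a maximum
matching of `G − s`, and `g(G − s, w) = 0`, i.e. moving the token from `s` to `w` is a
winning move in Undirected Geography. -/
theorem stmt3 {V : Type} [Fintype V] [DecidableEq V]
    (G : SimpleGraph V) [DecidableRel G.Adj]
    (hE : ∃ u v : V, G.Adj u v) (s : V)
    (hs : ∀ M : G.Subgraph, IsMaxMatchingOn G Set.univ M → MatchingCovers M s)
    (M : G.Subgraph) (hM : IsMaxMatchingOn G Set.univ M)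
    (w : V) (hw : M.Adj s w) :
    IsMaxMatchingOn G {s}ᶜ (M.deleteVerts {s, w}) ∧
      geo G (Finset.univ.erase s) w = 0 :=
  stmt3_general G s hs M hM w hw
end

section
/- Let D be a finite directed graph with reduced undirected graph D', let (x,y) be an arc of D, and let a, a₀, b, c, c₀, d, d₀, f be the gadget vertices of this arc in D'. Let K be the induced subgraph of D' on any vertex subset that excludes y but includes all of a, a₀, b, c, c₀, d, d₀, f (the vertex x and all other vertices of D' may or may not belong to K). Then the Undirected Geography Grundy value satisfies g(K, d) ∈ {2, 3}. -/
/-- Vertices of the reduced undirected graph `D'` of a directed graph `D` on `V`: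
original vertices (`orig`), one pendant vertex per original vertex (`pend`), and for
each arc `e` the eight gadget vertices `a, a₀, b, c, c₀, d, d₀, f`, encoded as
`gad e 0, …, gad e 7` in that order. -/
abbrev RedV (V : Type) : Type := V ⊕ V ⊕ ((V × V) × Fin 8)

def orig {V : Type} (v : V) : RedV V := Sum.inl v
def pend {V : Type} (v : V) : RedV V := Sum.inr (Sum.inl v)
def gad {V : Type} (e : V × V) (i : Fin 8) : RedV V := Sum.inr (Sum.inr (e, i))

/-- The internal edges of the gadget for one arc, with the names
`a = 0, a₀ = 1, b = 2, c = 3, c₀ = 4, d = 5, d₀ = 6, f = 7`: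
`{a,a₀}, {a,b}, {b,c}, {c,c₀}, {b,f}, {c,d}, {d,d₀}, {f,d}`. -/
def gadgetPairs : List (Fin 8 × Fin 8) :=
  [(0,1), (0,2), (2,3), (3,4), (2,7), (3,5), (5,6), (7,5)]

/-- Base edge relation of the reduced graph `D'` of the digraph with arc set `A`:
each vertex `v` gets a pendant edge `{v, v₀}`, and each arc `(x,y) ∈ A` is replaced
by its gadget, with edges `{x,a}` and `{d,y}` to the original vertices and the
internal gadget edges. -/
def redRel {V : Type} [DecidableEq V] (A : Finset (V × V)) : RedV V → RedV V → Prop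
  | Sum.inl v, Sum.inr (Sum.inl w) => v = w
  | Sum.inl v, Sum.inr (Sum.inr (e, i)) =>
      e ∈ A ∧ ((v = e.1 ∧ i = 0) ∨ (v = e.2 ∧ i = 5))
  | Sum.inr (Sum.inr (e, i)), Sum.inr (Sum.inr (e', j)) =>
      e = e' ∧ e ∈ A ∧ (i, j) ∈ gadgetPairs
  | _, _ => False

instance {V : Type} [DecidableEq V] (A : Finset (V × V)) : DecidableRel (redRel A) :=
  fun u w => by
    rcases u with v | v | ⟨e, i⟩ <;> rcases w with v' | v' | ⟨e', j⟩ <;>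
      simp only [redRel] <;> infer_instance

/-- The reduced undirected graph `D'` of the digraph with vertex type `V` and
arc set `A`. -/
def reduced {V : Type} [DecidableEq V] (A : Finset (V × V)) : SimpleGraph (RedV V) where
  Adj u w := u ≠ w ∧ (redRel A u w ∨ redRel A w u)
  symm := ⟨fun u w h => ⟨h.1.symm, h.2.symm⟩⟩
  loopless := ⟨fun u h => h.1 rfl⟩

instance {V : Type} [DecidableEq V] (A : Finset (V × V)) : DecidableRel (reduced A).Adj :=
  fun u w => inferInstanceAs (Decidable (u ≠ w ∧ (redRel A u w ∨ redRel A w u)))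

/-! In `K - d` the pendant `d₀` is a losing option (value `0`), and `f` has value `1`: its only
move is to `b`, all of whose remaining options `a` and `c` still carry their pendant leaves `a₀`
and `c₀`, so they are winning and `b` is losing. Hence the option values of `d` are
`{g(c), 0, 1}`, whose mex is `2` or `3` whatever `g(c)` is. -/

lemma mex_notMem (s : Finset ℕ) : mex s ∉ s :=
  Nat.sInf_mem (s.finite_toSet.infinite_compl.nonempty)

lemma mex_eq_of_notMem_of_forall_lt_mem {s : Finset ℕ} {n : ℕ} (hn : n ∉ s)
    (h : ∀ m < n, m ∈ s) : mex s = n :=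
  (Nat.sInf_le hn).antisymm (not_lt.mp fun hlt => mex_notMem s (h _ hlt))

lemma mex_eq_zero_of_zero_notMem {s : Finset ℕ} (h : 0 ∉ s) : mex s = 0 :=
  mex_eq_of_notMem_of_forall_lt_mem h (by simp)

lemma mex_ne_zero_of_zero_mem {s : Finset ℕ} (h : 0 ∈ s) : mex s ≠ 0 :=
  fun h0 => mex_notMem s (h0 ▸ h)

lemma mex_singleton_zero : mex {0} = 1 :=
  mex_eq_of_notMem_of_forall_lt_mem (by decide) (by decide)

lemma mex_insert_zero_one_mem (n : ℕ) : mex {n, 0, 1} ∈ ({2, 3} : Set ℕ) := by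
  by_cases hn : n = 2
  · subst hn
    exact Or.inr (mex_eq_of_notMem_of_forall_lt_mem (by decide) (by decide))
  · refine Or.inl (mex_eq_of_notMem_of_forall_lt_mem (by simp [Ne.symm hn]) ?_)
    intro m hm
    interval_cases m <;> simp

section Geo

variable {V : Type} [DecidableEq V] (G : SimpleGraph V) [DecidableRel G.Adj]
  {S : Finset V} {s : V}

lemma geo_of_mem (hs : s ∈ S) :
    geo G S s = mex (((S.erase s).filter (G.Adj s)).image (geo G (S.erase s))) := by
  rw [geo, dif_pos hs]

lemma geo_eq_mex_of_forall_mem_iff (hs : s ∈ S) {N : Finset V}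
    (hN : ∀ w, w ∈ N ↔ w ∈ S.erase s ∧ G.Adj s w) :
    geo G S s = mex (N.image (geo G (S.erase s))) := by
  rw [geo_of_mem G hs]
  congr 2
  ext w
  rw [hN, Finset.mem_filter]

lemma geo_eq_zero_of_forall_adj_ne_zero (hs : s ∈ S)
    (h : ∀ w ∈ S.erase s, G.Adj s w → geo G (S.erase s) w ≠ 0) : geo G S s = 0 := by
  rw [geo_of_mem G hs]
  refine mex_eq_zero_of_zero_notMem fun h0 => ?_
  obtain ⟨w, hw, hw0⟩ := Finset.mem_image.mp h0
  rw [Finset.mem_filter] at hw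
  exact h w hw.1 hw.2 hw0

lemma geo_ne_zero_of_adj_geo_eq_zero (hs : s ∈ S) {w : V} (hw : w ∈ S.erase s)
    (hadj : G.Adj s w) (h0 : geo G (S.erase s) w = 0) : geo G S s ≠ 0 := by
  rw [geo_of_mem G hs]
  exact mex_ne_zero_of_zero_mem
    (Finset.mem_image.mpr ⟨w, Finset.mem_filter.mpr ⟨hw, hadj⟩, h0⟩)

lemma geo_eq_zero_of_forall_adj_eq_of_notMem {ℓ : V} (hℓ : ℓ ∈ S) (hs : s ∉ S)
    (hpend : ∀ w, G.Adj ℓ w → w = s) : geo G S ℓ = 0 :=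
  geo_eq_zero_of_forall_adj_ne_zero G hℓ fun w hw hadj =>
    absurd (Finset.mem_of_mem_erase hw) (hpend w hadj ▸ hs)

lemma geo_ne_zero_of_adj_pendant (hs : s ∈ S) {ℓ : V} (hℓ : ℓ ∈ S) (hadj : G.Adj s ℓ)
    (hpend : ∀ w, G.Adj ℓ w → w = s) : geo G S s ≠ 0 :=
  geo_ne_zero_of_adj_geo_eq_zero G hs (Finset.mem_erase.mpr ⟨hadj.ne.symm, hℓ⟩) hadj
    (geo_eq_zero_of_forall_adj_eq_of_notMem G (Finset.mem_erase.mpr ⟨hadj.ne.symm, hℓ⟩)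
      (Finset.notMem_erase s S) hpend)

end Geo

section Gadget

variable {V : Type} [DecidableEq V] {A : Finset (V × V)} {e : V × V}

lemma reduced_adj_gad_iff (he : e ∈ A) (i : Fin 8) (w : RedV V) :
    (reduced A).Adj (gad e i) w ↔
      (∃ j, ((i, j) ∈ gadgetPairs ∨ (j, i) ∈ gadgetPairs) ∧ w = gad e j) ∨
        (i = 0 ∧ w = orig e.1) ∨ (i = 5 ∧ w = orig e.2) := by
  rcases w with v | v | ⟨e', j⟩
  · simp [reduced, redRel, gad, orig, he, and_comm]
  · simp [reduced, redRel, gad, orig]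
  · have irrefl : ∀ k : Fin 8, (k, k) ∉ gadgetPairs := by decide
    simp only [reduced, redRel, gad, orig, ne_eq, Sum.inr.injEq, Prod.mk.injEq, not_and,
      exists_eq_right_right', reduceCtorEq, and_false, or_self, or_false]
    constructor
    · rintro ⟨-, ⟨rfl, -, h⟩ | ⟨rfl, -, h⟩⟩ <;> tauto
    · rintro ⟨h, rfl⟩
      refine ⟨fun _ hij => ?_, by tauto⟩
      subst hij
      tauto

lemma reduced_adj_gad_iff_of_pairs (he : e ∈ A) {i : Fin 8} {js : List (Fin 8)}
    (hjs : ∀ j, ((i, j) ∈ gadgetPairs ∨ (j, i) ∈ gadgetPairs) ↔ j ∈ js) (w : RedV V) :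
    (reduced A).Adj (gad e i) w ↔
      (∃ j ∈ js, w = gad e j) ∨ (i = 0 ∧ w = orig e.1) ∨ (i = 5 ∧ w = orig e.2) := by
  simp only [reduced_adj_gad_iff he, hjs]

lemma reduced_adj_a_iff (he : e ∈ A) (w : RedV V) :
    (reduced A).Adj (gad e 0) w ↔ w = gad e 1 ∨ w = gad e 2 ∨ w = orig e.1 := by
  simpa [or_assoc] using reduced_adj_gad_iff_of_pairs he (i := 0) (js := [1, 2]) (by decide) w

lemma reduced_adj_a₀_iff (he : e ∈ A) (w : RedV V) :
    (reduced A).Adj (gad e 1) w ↔ w = gad e 0 := by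
  simpa [or_assoc] using reduced_adj_gad_iff_of_pairs he (i := 1) (js := [0]) (by decide) w

lemma reduced_adj_b_iff (he : e ∈ A) (w : RedV V) :
    (reduced A).Adj (gad e 2) w ↔ w = gad e 0 ∨ w = gad e 3 ∨ w = gad e 7 := by
  simpa [or_assoc] using reduced_adj_gad_iff_of_pairs he (i := 2) (js := [0, 3, 7]) (by decide) w

lemma reduced_adj_c_iff (he : e ∈ A) (w : RedV V) :
    (reduced A).Adj (gad e 3) w ↔ w = gad e 2 ∨ w = gad e 4 ∨ w = gad e 5 := by
  simpa [or_assoc] using reduced_adj_gad_iff_of_pairs he (i := 3) (js := [2, 4, 5]) (by decide) w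

lemma reduced_adj_c₀_iff (he : e ∈ A) (w : RedV V) :
    (reduced A).Adj (gad e 4) w ↔ w = gad e 3 := by
  simpa [or_assoc] using reduced_adj_gad_iff_of_pairs he (i := 4) (js := [3]) (by decide) w

lemma reduced_adj_d_iff (he : e ∈ A) (w : RedV V) :
    (reduced A).Adj (gad e 5) w ↔
      w = gad e 3 ∨ w = gad e 6 ∨ w = gad e 7 ∨ w = orig e.2 := by
  simpa [or_assoc] using reduced_adj_gad_iff_of_pairs he (i := 5) (js := [3, 6, 7]) (by decide) w

lemma reduced_adj_d₀_iff (he : e ∈ A) (w : RedV V) :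
    (reduced A).Adj (gad e 6) w ↔ w = gad e 5 := by
  simpa [or_assoc] using reduced_adj_gad_iff_of_pairs he (i := 6) (js := [5]) (by decide) w

lemma reduced_adj_f_iff (he : e ∈ A) (w : RedV V) :
    (reduced A).Adj (gad e 7) w ↔ w = gad e 2 ∨ w = gad e 5 := by
  simpa [or_assoc] using reduced_adj_gad_iff_of_pairs he (i := 7) (js := [2, 5]) (by decide) w

end Gadget

section WrongWay

variable {V : Type} [DecidableEq V] {A : Finset (V × V)} {e : V × V} {S : Finset (RedV V)}

lemma gad_mem_erase_gad {i j : Fin 8} (hij : i ≠ j) (h : gad e i ∈ S) :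
    gad e i ∈ S.erase (gad e j) :=
  Finset.mem_erase.mpr ⟨fun heq => hij (by simpa [gad] using heq), h⟩

lemma geo_gad_a_ne_zero (he : e ∈ A) (ha : gad e 0 ∈ S) (ha₀ : gad e 1 ∈ S) :
    geo (reduced A) S (gad e 0) ≠ 0 :=
  geo_ne_zero_of_adj_pendant _ ha ha₀ ((reduced_adj_a_iff he _).mpr (Or.inl rfl))
    fun w hw => (reduced_adj_a₀_iff he w).mp hw

lemma geo_gad_c_ne_zero (he : e ∈ A) (hc : gad e 3 ∈ S) (hc₀ : gad e 4 ∈ S) :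
    geo (reduced A) S (gad e 3) ≠ 0 :=
  geo_ne_zero_of_adj_pendant _ hc hc₀ ((reduced_adj_c_iff he _).mpr (Or.inr (Or.inl rfl)))
    fun w hw => (reduced_adj_c₀_iff he w).mp hw

lemma geo_gad_d₀_eq_zero (he : e ∈ A) (hd₀ : gad e 6 ∈ S) (hd : gad e 5 ∉ S) :
    geo (reduced A) S (gad e 6) = 0 :=
  geo_eq_zero_of_forall_adj_eq_of_notMem _ hd₀ hd fun w hw => (reduced_adj_d₀_iff he w).mp hw

lemma geo_gad_b_eq_zero (he : e ∈ A) (ha : gad e 0 ∈ S) (ha₀ : gad e 1 ∈ S)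
    (hb : gad e 2 ∈ S) (hc : gad e 3 ∈ S) (hc₀ : gad e 4 ∈ S) (hf : gad e 7 ∉ S) :
    geo (reduced A) S (gad e 2) = 0 :=
  geo_eq_zero_of_forall_adj_ne_zero _ hb fun w hw hadj => by
    rcases (reduced_adj_b_iff he w).mp hadj with rfl | rfl | rfl
    · exact geo_gad_a_ne_zero he (gad_mem_erase_gad (by decide) ha)
        (gad_mem_erase_gad (by decide) ha₀)
    · exact geo_gad_c_ne_zero he (gad_mem_erase_gad (by decide) hc)
        (gad_mem_erase_gad (by decide) hc₀)
    · exact absurd (Finset.mem_of_mem_erase hw) hf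

lemma geo_gad_f_eq_one (he : e ∈ A) (ha : gad e 0 ∈ S) (ha₀ : gad e 1 ∈ S)
    (hb : gad e 2 ∈ S) (hc : gad e 3 ∈ S) (hc₀ : gad e 4 ∈ S) (hf : gad e 7 ∈ S)
    (hd : gad e 5 ∉ S) : geo (reduced A) S (gad e 7) = 1 := by
  have hb' : gad e 2 ∈ S.erase (gad e 7) := gad_mem_erase_gad (by decide) hb
  rw [geo_eq_mex_of_forall_mem_iff _ hf (N := {gad e 2}), Finset.image_singleton,
    geo_gad_b_eq_zero he (gad_mem_erase_gad (by decide) ha) (gad_mem_erase_gad (by decide) ha₀)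
      hb' (gad_mem_erase_gad (by decide) hc) (gad_mem_erase_gad (by decide) hc₀)
      (Finset.notMem_erase _ _), mex_singleton_zero]
  intro w
  rw [Finset.mem_singleton, reduced_adj_f_iff he]
  constructor
  · rintro rfl
    exact ⟨hb', Or.inl rfl⟩
  · rintro ⟨hw, rfl | rfl⟩
    · rfl
    · exact absurd (Finset.mem_of_mem_erase hw) hd

lemma geo_gad_d_eq_mex (he : e ∈ A) (hd : gad e 5 ∈ S) (hy : orig e.2 ∉ S)
    (hc : gad e 3 ∈ S) (hd₀ : gad e 6 ∈ S) (hf : gad e 7 ∈ S) :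
    geo (reduced A) S (gad e 5) = mex {geo (reduced A) (S.erase (gad e 5)) (gad e 3),
      geo (reduced A) (S.erase (gad e 5)) (gad e 6),
      geo (reduced A) (S.erase (gad e 5)) (gad e 7)} := by
  rw [geo_eq_mex_of_forall_mem_iff _ hd (N := {gad e 3, gad e 6, gad e 7}),
    Finset.image_insert, Finset.image_insert, Finset.image_singleton]
  intro w
  rw [reduced_adj_d_iff he, Finset.mem_insert, Finset.mem_insert, Finset.mem_singleton]
  constructor
  · rintro (rfl | rfl | rfl)
    · exact ⟨gad_mem_erase_gad (by decide) hc, Or.inl rfl⟩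
    · exact ⟨gad_mem_erase_gad (by decide) hd₀, Or.inr (Or.inl rfl)⟩
    · exact ⟨gad_mem_erase_gad (by decide) hf, Or.inr (Or.inr (Or.inl rfl))⟩
  · rintro ⟨hw, rfl | rfl | rfl | rfl⟩
    · exact Or.inl rfl
    · exact Or.inr (Or.inl rfl)
    · exact Or.inr (Or.inr rfl)
    · exact absurd (Finset.mem_of_mem_erase hw) hy

end WrongWay

/-- Wrong Way: let `(x,y)` be an arc of `D` and let `B` be any vertex subset
of `D'` that excludes `y` but includes all eight gadget vertices of this arc
(`x` and all other vertices may or may not belong to `B`).  Then on the induced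
subgraph `K = D'[B]`, the Grundy value with the token on `d` is `2` or `3`. -/
theorem stmt6 {V : Type} [DecidableEq V] (A : Finset (V × V)) (x y : V)
    (hxy : (x, y) ∈ A) (B : Finset (RedV V))
    (hy : orig y ∉ B) (hgad : ∀ i : Fin 8, gad (x, y) i ∈ B) :
    geo (reduced A) B (gad (x, y) 5) ∈ ({2, 3} : Set ℕ) := by
  have hK : ∀ i, i ≠ 5 → gad (x, y) i ∈ B.erase (gad (x, y) 5) :=
    fun i hi => gad_mem_erase_gad hi (hgad i)
  have hd : gad (x, y) 5 ∉ B.erase (gad (x, y) 5) := Finset.notMem_erase _ _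
  rw [geo_gad_d_eq_mex hxy (hgad 5) hy (hgad 3) (hgad 6) (hgad 7),
    geo_gad_d₀_eq_zero hxy (hK 6 (by decide)) hd,
    geo_gad_f_eq_one hxy (hK 0 (by decide)) (hK 1 (by decide)) (hK 2 (by decide))
      (hK 3 (by decide)) (hK 4 (by decide)) (hK 7 (by decide)) hd]
  exact mex_insert_zero_one_mem _
end

section
/- Let G be a finite simple graph with vertex s, and let G⁺ be obtained from G by adding four new vertices start, start₀, start₂, start₂₀ and the edges {start, start₀}, {start, start₂}, {start₂, start₂₀}, {start₂, s} (the Prelude gadget). Then g(G⁺, start) = 1 if g(G,s) = 1, and g(G⁺, start) = 2 if g(G,s) ≠ 1. -/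
/-- Base edge relation of the Prelude-augmented graph `G⁺`: the four new vertices are
`start = 0`, `start₀ = 1`, `start₂ = 2`, `start₂₀ = 3` (the `Fin 4` summand); the new
edges are `{start, start₀}`, `{start, start₂}`, `{start₂, start₂₀}`, `{start₂, s}`. -/
def preRel {V : Type} (G : SimpleGraph V) (s : V) : V ⊕ Fin 4 → V ⊕ Fin 4 → Prop
  | Sum.inl u, Sum.inl w => G.Adj u w
  | Sum.inr i, Sum.inl u => i = 2 ∧ u = s
  | Sum.inr i, Sum.inr j => (i, j) ∈ [((0 : Fin 4), (1 : Fin 4)), (0, 2), (2, 3)]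
  | _, _ => False

instance {V : Type} [DecidableEq V] (G : SimpleGraph V) [DecidableRel G.Adj] (s : V) :
    DecidableRel (preRel G s) := fun u w => by
  rcases u with u | i <;> rcases w with w | j <;> simp only [preRel] <;> infer_instance

/-- The graph `G⁺` obtained from `G` by appending the Prelude gadget in front of `s`. -/
def preludeGraph {V : Type} (G : SimpleGraph V) (s : V) : SimpleGraph (V ⊕ Fin 4) where
  Adj u w := u ≠ w ∧ (preRel G s u w ∨ preRel G s w u)
  symm := ⟨fun u w h => ⟨h.1.symm, h.2.symm⟩⟩
  loopless := ⟨fun u h => h.1 rfl⟩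

instance {V : Type} [DecidableEq V] (G : SimpleGraph V) [DecidableRel G.Adj] (s : V) :
    DecidableRel (preludeGraph G s).Adj := fun u w =>
  inferInstanceAs (Decidable (u ≠ w ∧ (preRel G s u w ∨ preRel G s w u)))

/-! From `start` one moves either to the leaf `start₀` (value 0) or to `start₂`. From `start₂`
one moves either to the leaf `start₂₀` (value 0) or to `s`; once `start₂` is deleted, play from
`s` never leaves `G`, so `g(start₂) = mex {g(G,s), 0}`, which is 2 if `g(G,s) = 1` and 1
otherwise, and `g(G⁺, start) = mex {0, g(start₂)}` is then the other of the two. -/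

lemma mex_eq_of_notMem {s : Finset ℕ} {k : ℕ} (hk : k ∉ s) (hlt : ∀ m < k, m ∈ s) :
    mex s = k :=
  le_antisymm (Nat.sInf_le hk) (le_csInf ⟨k, hk⟩ fun _ hm => not_lt.1 fun h => hm (hlt _ h))

lemma mex_pair_zero (a : ℕ) : mex {a, 0} = if a = 1 then 2 else 1 := by
  split_ifs with ha
  · subst ha
    exact mex_eq_of_notMem (by simp) fun m hm => by interval_cases m <;> simp
  · exact mex_eq_of_notMem (by simpa using Ne.symm ha) fun m hm => by interval_cases m; simp

section geo

variable {V : Type} [DecidableEq V] {G : SimpleGraph V} [DecidableRel G.Adj]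

lemma geo_of_notMem {A : Finset V} {s : V} (hs : s ∉ A) : geo G A s = 0 := by
  rw [geo, dif_neg hs]

lemma geo_eq_mex_image {A N : Finset V} {s : V} (hs : s ∈ A)
    (hN : ∀ v, v ∈ N ↔ v ∈ A.erase s ∧ G.Adj s v) :
    geo G A s = mex (N.image (geo G (A.erase s))) := by
  rw [geo, dif_pos hs]
  congr 2
  ext v
  simp [hN]

lemma geo_eq_zero_of_forall_not_adj {A : Finset V} {s : V}
    (h : ∀ v ∈ A, ¬ G.Adj s v) : geo G A s = 0 := by
  by_cases hs : s ∈ A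
  · rw [geo_eq_mex_image hs (N := ∅) fun v => by simpa using fun _ hv => h v hv]
    exact mex_eq_of_notMem (by simp) fun m hm => absurd hm (Nat.not_lt_zero m)
  · exact geo_of_notMem hs

/-- Play from `f v` inside `B` never leaves the image of `f`, so it copies play from `v`. -/
lemma geo_embedding {W : Type} [DecidableEq W] {H : SimpleGraph W} [DecidableRel H.Adj]
    (f : G ↪g H) (A : Finset V) (B : Finset W) (hmem : ∀ v, f v ∈ B ↔ v ∈ A)
    (hclosed : ∀ v w, w ∈ B → H.Adj (f v) w → ∃ u, f u = w) (v : V) :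
    geo H B (f v) = geo G A v := by
  induction A using Finset.strongInduction generalizing B v with
  | _ A ih =>
    by_cases hv : v ∈ A
    · have hmem' : ∀ u, f u ∈ B.erase (f v) ↔ u ∈ A.erase v := fun u => by
        simp [hmem, f.injective.eq_iff]
      have hnbrs : ∀ w, w ∈ ((A.erase v).filter (G.Adj v)).map f.toEmbedding ↔
          w ∈ B.erase (f v) ∧ H.Adj (f v) w := fun w => by
        constructor
        · intro hw
          obtain ⟨u, hu, rfl⟩ := Finset.mem_map.1 hw
          rw [Finset.mem_filter, ← hmem'] at hu
          exact ⟨hu.1, f.map_adj_iff.2 hu.2⟩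
        · rintro ⟨hw, hadj⟩
          obtain ⟨u, rfl⟩ := hclosed v w (Finset.mem_of_mem_erase hw) hadj
          exact Finset.mem_map_of_mem _
            (Finset.mem_filter.2 ⟨(hmem' u).1 hw, f.map_adj_iff.1 hadj⟩)
      rw [geo_eq_mex_image ((hmem v).2 hv) hnbrs, geo_eq_mex_image hv fun _ => Finset.mem_filter,
        Finset.map_eq_image, Finset.image_image]
      refine congrArg mex (Finset.image_congr fun u _ => ?_)
      exact ih _ (Finset.erase_ssubset hv) _ hmem'
        (fun u w hw => hclosed u w (Finset.mem_of_mem_erase hw)) u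
    · rw [geo_of_notMem hv, geo_of_notMem ((hmem v).not.2 hv)]

end geo

section prelude

variable {V : Type} (G : SimpleGraph V) (s : V)

def preludeGraph.inlEmbedding : G ↪g preludeGraph G s where
  toFun := Sum.inl
  inj' := Sum.inl_injective
  map_rel_iff' {v w} := by
    show _ ∧ (G.Adj v w ∨ G.Adj w v) ↔ _
    exact ⟨fun h => h.2.elim id G.adj_symm, fun h => ⟨by simpa using h.ne, .inl h⟩⟩

lemma preludeGraph_adj_inr_inl (j : Fin 4) (v : V) :
    (preludeGraph G s).Adj (.inr j) (.inl v) ↔ j = 2 ∧ v = s := by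
  show _ ∧ (_ ∨ False) ↔ _
  simp [preRel]

lemma preludeGraph_adj_inr_inr (i j : Fin 4) :
    (preludeGraph G s).Adj (.inr i) (.inr j) ↔ (i = 0 ∧ (j = 1 ∨ j = 2)) ∨
      (j = 0 ∧ (i = 1 ∨ i = 2)) ∨ (i = 2 ∧ j = 3) ∨ (i = 3 ∧ j = 2) := by
  show _ ∧ _ ↔ _
  simp only [preRel, ne_eq, Sum.inr.injEq]
  decide +revert

variable [Fintype V] [DecidableEq V] [DecidableRel G.Adj]

lemma geo_preludeGraph_inl (v : V) :
    geo (preludeGraph G s) ((Finset.univ.erase (.inr 0)).erase (.inr 2)) (.inl v) =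
      geo G Finset.univ v := by
  refine geo_embedding (preludeGraph.inlEmbedding G s) _ _
    (fun _ => by simp [preludeGraph.inlEmbedding]) ?_ v
  rintro u (w | j) hj hadj
  · exact ⟨w, rfl⟩
  · have := (preludeGraph_adj_inr_inl G s j u).1 hadj.symm
    simp [this.1] at hj

lemma geo_preludeGraph_inr_two :
    geo (preludeGraph G s) (Finset.univ.erase (.inr 0)) (.inr 2) =
      mex {geo G Finset.univ s, 0} := by
  have hleaf :
      geo (preludeGraph G s) ((Finset.univ.erase (.inr 0)).erase (.inr 2)) (.inr 3) = 0 := by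
    refine geo_eq_zero_of_forall_not_adj ?_
    rintro (v | j) hj
    · simp [preludeGraph_adj_inr_inl]
    · simp [preludeGraph_adj_inr_inr] at hj ⊢
      omega
  rw [geo_eq_mex_image (N := {.inl s, .inr 3}) (by simp), Finset.image_insert,
    Finset.image_singleton, geo_preludeGraph_inl, hleaf]
  rintro (v | j)
  · simp [preludeGraph_adj_inr_inl, eq_comm]
  · simp [preludeGraph_adj_inr_inr]
    omega

lemma geo_preludeGraph_inr_zero :
    geo (preludeGraph G s) Finset.univ (.inr 0) = mex {0, mex {geo G Finset.univ s, 0}} := by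
  have hleaf : geo (preludeGraph G s) (Finset.univ.erase (.inr 0)) (.inr 1) = 0 := by
    refine geo_eq_zero_of_forall_not_adj ?_
    rintro (v | j) hj
    · simp [preludeGraph_adj_inr_inl]
    · simp [preludeGraph_adj_inr_inr] at hj ⊢
      omega
  rw [geo_eq_mex_image (N := {.inr 1, .inr 2}) (by simp), Finset.image_insert,
    Finset.image_singleton, hleaf, geo_preludeGraph_inr_two]
  rintro (v | j)
  · simp [preludeGraph_adj_inr_inl]
  · simp [preludeGraph_adj_inr_inr]
    omega

end prelude

/-- for the Prelude-augmented graph `G⁺`,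
`g(G⁺, start) = 1` if `g(G,s) = 1`, and `g(G⁺, start) = 2` if `g(G,s) ≠ 1`. -/
theorem stmt9 {V : Type} [Fintype V] [DecidableEq V]
    (G : SimpleGraph V) [DecidableRel G.Adj] (s : V) :
    (geo G Finset.univ s = 1 →
      geo (preludeGraph G s) Finset.univ (Sum.inr 0) = 1) ∧
    (geo G Finset.univ s ≠ 1 →
      geo (preludeGraph G s) Finset.univ (Sum.inr 0) = 2) := by
  rw [geo_preludeGraph_inr_zero, Finset.pair_comm]
  constructor <;> intro h <;> simp [h, mex_pair_zero]
end
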